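/- Let t > 0 be real, set s* = 1/2 − it, and let d_m denote the m-th Taylor coefficient at z = 0 of g(z) := e^{s* z³/3} · f_{s*}(z). Then for every real ρ with 0 < ρ < 1 and every nonnegative integer m, |d_m| ≤ ρ^{−m} · exp( ρ/2 + ρ²/4 + |s*| · Σ_{ℓ=4}^∞ ρ^ℓ/ℓ ). -/

import Mathlib

/-!
On the unit disc, `e^{s z³/3} f_s(z) = exp(s (z - z²/2 + z³/3 - log(1+z)) - (z - z²/2)/2)`:
the factor `e^{s z³/3}` cancels the first three Taylor terms of `s log(1+z)`, so on `|z| = ρ`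
the exponent has real part at most `ρ/2 + ρ²/4 + |s| Σ_{ℓ≥4} ρ^ℓ/ℓ`.
Cauchy's estimate on the circle of radius `ρ` then bounds the Taylor coefficients.
-/

open Real Complex

/-- `f_s(z) = e^{(s−1/2)(z − z²/2)}/(1+z)^s`, holomorphic on the unit disc,
with `(1+z)^s` the principal branch. -/
noncomputable def fRS (s : ℂ) (z : ℂ) : ℂ :=
  Complex.exp ((s - 1/2) * (z - z^2/2)) / (1+z)^s

/-- `g(z) = e^{s* z³/3} f_{s*}(z)` for `s* = 1/2 − it`. -/
noncomputable def gRS (t : ℝ) (z : ℂ) : ℂ :=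
  Complex.exp ((1/2 - t * Complex.I) * z^3/3) * fRS (1/2 - t * Complex.I) z

lemma summable_pow_add_div {ρ : ℝ} (hρ0 : 0 ≤ ρ) (hρ1 : ρ < 1) (n : ℕ) :
    Summable fun ℓ : ℕ ↦ ρ ^ (ℓ + n) / ((ℓ : ℝ) + n) := by
  have h := (Real.hasSum_pow_div_log_of_abs_lt_one (x := ρ) (by rwa [abs_of_nonneg hρ0])).summable
  have h' : Summable fun k : ℕ ↦ ρ ^ k / (k : ℝ) :=
    (summable_nat_add_iff 1).mp (by exact_mod_cast h)
  exact_mod_cast (summable_nat_add_iff n).mpr h'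

lemma norm_log_sub_logTaylor_le_tsum (n : ℕ) {z : ℂ} (hz : ‖z‖ < 1) :
    ‖log (1 + z) - logTaylor n z‖ ≤ ∑' ℓ : ℕ, ‖z‖ ^ (ℓ + n) / ((ℓ : ℝ) + n) := by
  have htail := (hasSum_nat_add_iff' n).mpr (hasSum_taylorSeries_log hz)
  refine htail.norm_le_of_bounded (summable_pow_add_div (norm_nonneg z) hz n).hasSum fun ℓ ↦ ?_
  rw [norm_div, norm_mul, norm_pow, norm_pow, norm_neg, norm_one, one_pow, one_mul]
  push_cast
  rw [← Nat.cast_add, Complex.norm_natCast, Nat.cast_add]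

lemma logTaylor_four (z : ℂ) : logTaylor 4 z = z - z ^ 2 / 2 + z ^ 3 / 3 := by
  simp [logTaylor, Finset.sum_range_succ]
  ring

lemma exp_mul_fRS_eq {s z : ℂ} (hz : ‖z‖ < 1) :
    Complex.exp (s * z ^ 3 / 3) * fRS s z
      = Complex.exp (s * (logTaylor 4 z - log (1 + z)) - (z - z ^ 2 / 2) / 2) := by
  have hne : 1 + z ≠ 0 := slitPlane_ne_zero (mem_slitPlane_of_norm_lt_one hz)
  rw [fRS, cpow_def_of_ne_zero hne, ← Complex.exp_sub, ← Complex.exp_add, logTaylor_four]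
  congr 1
  ring

lemma norm_exp_mul_fRS_le (s : ℂ) {z : ℂ} (hz : ‖z‖ < 1) :
    ‖Complex.exp (s * z ^ 3 / 3) * fRS s z‖
      ≤ Real.exp (‖z‖ / 2 + ‖z‖ ^ 2 / 4
          + ‖s‖ * ∑' ℓ : ℕ, ‖z‖ ^ (ℓ + 4) / ((ℓ : ℝ) + 4)) := by
  rw [exp_mul_fRS_eq hz, Complex.norm_exp, Real.exp_le_exp]
  have hlog : ‖logTaylor 4 z - log (1 + z)‖ ≤ ∑' ℓ : ℕ, ‖z‖ ^ (ℓ + 4) / ((ℓ : ℝ) + 4) := by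
    simpa [norm_sub_rev] using norm_log_sub_logTaylor_le_tsum 4 hz
  have hquad : ‖z - z ^ 2 / 2‖ ≤ ‖z‖ + ‖z‖ ^ 2 / 2 := by
    have h := norm_sub_le z (z ^ 2 / 2)
    rwa [norm_div, norm_pow, Complex.norm_ofNat] at h
  calc (s * (logTaylor 4 z - log (1 + z)) - (z - z ^ 2 / 2) / 2).re
      ≤ ‖s * (logTaylor 4 z - log (1 + z)) - (z - z ^ 2 / 2) / 2‖ := re_le_norm _
    _ ≤ ‖s‖ * ‖logTaylor 4 z - log (1 + z)‖ + ‖z - z ^ 2 / 2‖ / 2 := by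
        have h := norm_sub_le (s * (logTaylor 4 z - log (1 + z))) ((z - z ^ 2 / 2) / 2)
        rwa [norm_mul, norm_div, Complex.norm_ofNat] at h
    _ ≤ ‖s‖ * ∑' ℓ : ℕ, ‖z‖ ^ (ℓ + 4) / ((ℓ : ℝ) + 4) + (‖z‖ + ‖z‖ ^ 2 / 2) / 2 := by
        gcongr
    _ = _ := by ring

lemma differentiableAt_exp_mul_fRS (s : ℂ) {z : ℂ} (hz : ‖z‖ < 1) :
    DifferentiableAt ℂ (fun w ↦ Complex.exp (s * w ^ 3 / 3) * fRS s w) z := by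
  have hslit := mem_slitPlane_of_norm_lt_one hz
  have hpow : DifferentiableAt ℂ (fun w : ℂ ↦ (1 + w) ^ s) z :=
    (differentiableAt_id.const_add 1).cpow_const hslit
  have hne : (1 + z) ^ s ≠ 0 := by
    rw [Ne, cpow_eq_zero_iff]
    exact fun h ↦ slitPlane_ne_zero hslit h.1
  unfold fRS
  fun_prop (disch := assumption)

theorem stmt_11_general (t : ℝ) (ρ : ℝ) (hρ0 : 0 < ρ) (hρ1 : ρ < 1) (m : ℕ) :
    ‖iteratedDeriv m (gRS t) 0 / (Nat.factorial m : ℂ)‖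
      ≤ ρ^(-(m:ℤ)) * Real.exp (ρ/2 + ρ^2/4
          + ‖(1/2 - t * Complex.I : ℂ)‖ * ∑' ℓ : ℕ, ρ^(ℓ+4)/((ℓ:ℝ)+4)) := by
  have hdiff : DiffContOnCl ℂ (gRS t) (Metric.ball 0 ρ) := by
    refine DifferentiableOn.diffContOnCl_ball (U := Metric.ball 0 1) (fun z hz ↦ ?_)
      (Metric.closedBall_subset_ball hρ1)
    exact (differentiableAt_exp_mul_fRS _ (mem_ball_zero_iff.mp hz)).differentiableWithinAt
  have hbound : ∀ z ∈ Metric.sphere (0 : ℂ) ρ, ‖gRS t z‖ ≤ Real.exp (ρ/2 + ρ^2/4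
      + ‖(1/2 - t * Complex.I : ℂ)‖ * ∑' ℓ : ℕ, ρ^(ℓ+4)/((ℓ:ℝ)+4)) := by
    intro z hz
    rw [mem_sphere_zero_iff_norm] at hz
    have h := norm_exp_mul_fRS_le (1/2 - t * Complex.I) (hz.trans_lt hρ1)
    rwa [hz] at h
  have hcauchy := norm_iteratedDeriv_le_of_forall_mem_sphere_norm_le m hρ0 hdiff hbound
  rw [norm_div, Complex.norm_natCast, zpow_neg, zpow_natCast,
    div_le_iff₀ (by exact_mod_cast m.factorial_pos)]
  exact hcauchy.trans_eq (by field_simp)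

/-- Let `t > 0`, `s* = 1/2 − it`, and let `d_m = g^{(m)}(0)/m!` be the Taylor
coefficients of `g(z) = e^{s* z³/3} f_{s*}(z)` at `0`. Then for every `0 < ρ < 1`
and every `m ≥ 0`, `|d_m| ≤ ρ^{−m} exp(ρ/2 + ρ²/4 + |s*| Σ_{ℓ=4}^∞ ρ^ℓ/ℓ)`. -/
theorem stmt_11 (t : ℝ) (ht : 0 < t) (ρ : ℝ) (hρ0 : 0 < ρ) (hρ1 : ρ < 1) (m : ℕ) :
    ‖iteratedDeriv m (gRS t) 0 / (Nat.factorial m : ℂ)‖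
      ≤ ρ^(-(m:ℤ)) * Real.exp (ρ/2 + ρ^2/4
          + ‖(1/2 - t * Complex.I : ℂ)‖ * ∑' ℓ : ℕ, ρ^(ℓ+4)/((ℓ:ℝ)+4)) :=
  stmt_11_general t ρ hρ0 hρ1 m
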